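/- Let R be an F-finite ring of characteristic p > 0, and let I ⊆ R be a uniformly F-compatible ideal. If P ⊇ I is an ideal whose image P/I in R/I is uniformly F-compatible, then P is uniformly F-compatible in R. -/

import Mathlib

/-- An additive map `φ : R → R` viewed as an `R`-linear map `F^e_* R → R` (with `q = p^e`):
it satisfies `φ(r^q · x) = r · φ(x)`. -/
def IsPeLinear (R : Type*) [CommRing R] (q : ℕ) (φ : R → R) : Prop :=
  (∀ x y : R, φ (x + y) = φ x + φ y) ∧ ∀ r x : R, φ (r ^ q * x) = r * φ x

/-- An ideal `I ⊆ R` is uniformly `F`-compatible if for every `e > 0` and every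
`R`-linear map `φ : F^e_* R → R` one has `φ(F^e_* I) ⊆ I`. -/
def UnifFCompat (R : Type*) [CommRing R] (p : ℕ) (I : Ideal R) : Prop :=
  ∀ e : ℕ, 0 < e → ∀ φ : R → R, IsPeLinear R (p ^ e) φ → ∀ x ∈ I, φ x ∈ I

/-- `R` is `F`-finite: `R` is module-finite over itself via the Frobenius. -/
def FFinite (R : Type*) [CommRing R] (p : ℕ) [Fact p.Prime] [CharP R p] : Prop :=
  RingHom.Finite (frobenius R p)

/-- `R` is `F`-split (`F`-pure): some `R`-linear map `F^e_* R → R` sends `1` to `1`. -/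
def FSplit (R : Type*) [CommRing R] (p : ℕ) : Prop :=
  ∃ e : ℕ, 0 < e ∧ ∃ φ : R → R, IsPeLinear R (p ^ e) φ ∧ φ 1 = 1

namespace IsPeLinear

variable {R : Type*} [CommRing R] {q : ℕ} {φ : R → R}

theorem map_sub (h : IsPeLinear R q φ) (a b : R) : φ (a - b) = φ a - φ b :=
  (AddMonoidHom.mk' φ h.1).map_sub a b

def quotientMap (h : IsPeLinear R q φ) (I : Ideal R) (hI : ∀ x ∈ I, φ x ∈ I) : R ⧸ I → R ⧸ I :=
  Quotient.map' φ fun a b hab => by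
    rw [Submodule.quotientRel_def] at hab ⊢
    rw [← h.map_sub]
    exact hI _ hab

variable (h : IsPeLinear R q φ) {I : Ideal R} (hI : ∀ x ∈ I, φ x ∈ I)

@[simp]
theorem quotientMap_mk (a : R) :
    h.quotientMap I hI (Ideal.Quotient.mk I a) = Ideal.Quotient.mk I (φ a) :=
  rfl

theorem isPeLinear_quotientMap : IsPeLinear (R ⧸ I) q (h.quotientMap I hI) := by
  constructor
  · rintro ⟨a⟩ ⟨b⟩
    exact congrArg (Ideal.Quotient.mk I) (h.1 a b)
  · rintro ⟨r⟩ ⟨a⟩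
    exact congrArg (Ideal.Quotient.mk I) (h.2 r a)

end IsPeLinear

theorem unifFCompat_of_quotient_general {R : Type*} [CommRing R] (p : ℕ)
    (I : Ideal R) (hI : UnifFCompat R p I)
    (P : Ideal R) (hIP : I ≤ P)
    (hPbar : UnifFCompat (R ⧸ I) p (P.map (Ideal.Quotient.mk I))) :
    UnifFCompat R p P := by
  intro e he φ hφ x hx
  have hφI : ∀ y ∈ I, φ y ∈ I := hI e he φ hφ
  have hφx := hPbar e he _ (hφ.isPeLinear_quotientMap hφI) _
    ((Ideal.mem_quotient_iff_mem hIP).mpr hx)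
  rwa [IsPeLinear.quotientMap_mk, Ideal.mem_quotient_iff_mem hIP] at hφx

/-- If `I` is uniformly `F`-compatible in `R` and `P ⊇ I` is an ideal whose image
`P/I` in `R/I` is uniformly `F`-compatible, then `P` is uniformly `F`-compatible
in `R`. -/
theorem unifFCompat_of_quotient {R : Type*} [CommRing R] (p : ℕ) [Fact p.Prime]
    [CharP R p] (hFF : FFinite R p) (I : Ideal R) (hI : UnifFCompat R p I)
    (P : Ideal R) (hIP : I ≤ P)
    (hPbar : UnifFCompat (R ⧸ I) p (P.map (Ideal.Quotient.mk I))) :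
    UnifFCompat R p P :=
  unifFCompat_of_quotient_general p I hI P hIP hPbar
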